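/- arXiv:0804.0171 — 11 statements merged into one kernel-verified Lean document; each statement's English description precedes it below -/
import Mathlib

section
/- For every integer N ≥ 2, every n ∈ ℤ, every k ∈ ℤ and every j ∈ {1,2,3,4,5,6}, the edge vector e_{n,j,k} of the armchair nanotube graph Γ^N has Euclidean norm 1; that is, every edge of Γ^N is a segment of length 1 (this justifies the length-preserving local coordinate t ∈ [0,1] on each edge). -/
/-!
All vertices lie on the cylinder of radius `R`, where the squared chord between the points with
cylindrical coordinates `(θ₁, z₁)`, `(θ₂, z₂)` is `2R²(1 - cos (θ₂ - θ₁)) + (z₂ - z₁)²`.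
Since `R sin β = 1`, `R cos β = R₁`, `2R sin α = 1`, `2R cos α = R₂`, a horizontal edge
(`Δθ = 2α`, `Δz = 0`) has length `2R sin α = 1`, and a slanted one (`Δθ = ±(β - α)`, `Δz = ±h`)
has squared length `2R² - R₁R₂ - 1 + h² = 1`.
That consecutive vertices are separated by exactly these angles reduces to `α + β = π/N`, and
this is where the choice of `R` enters: it makes `sin(π/N) R₁ = cos(π/N) + 1/2` and
`sin(π/N) R₂ = cos(π/N) + 2`, whence `R₁R₂ = 2R² cos(π/N) + 1` and `cos (α + β) = cos(π/N)`.
-/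

/-- The radius `R = √(cos(π/N) + 5/4) / sin(π/N)` of the armchair nanotube. -/
noncomputable def armR (N : ℕ) : ℝ :=
  Real.sqrt (Real.cos (Real.pi / N) + 5 / 4) / Real.sin (Real.pi / N)

noncomputable def armR1 (N : ℕ) : ℝ := Real.sqrt ((armR N) ^ 2 - 1)

noncomputable def armR2 (N : ℕ) : ℝ := Real.sqrt (4 * (armR N) ^ 2 - 1)

/-- `α = arcsin(1/(2R))`. -/
noncomputable def armAlpha (N : ℕ) : ℝ := Real.arcsin (1 / (2 * armR N))

/-- `β = arcsin(1/R)`. -/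
noncomputable def armBeta (N : ℕ) : ℝ := Real.arcsin (1 / armR N)

/-- The height step `h = √(2 + R₁R₂ − 2R²)`. -/
noncomputable def armH (N : ℕ) : ℝ :=
  Real.sqrt (2 + armR1 N * armR2 N - 2 * (armR N) ^ 2)

/-- The angle `φ_k = kπ/N`. -/
noncomputable def armPhi (N : ℕ) (k : ℤ) : ℝ := k * Real.pi / N

/-- The vertex `r_{n,j,k}` of the armchair graph `Γ^N`; here `j : Fin 6`
encodes the index `j+1 ∈ {1,…,6}` of the paper. -/
noncomputable def armVertex (N : ℕ) (n : ℤ) (j : Fin 6) (k : ℤ) :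
    EuclideanSpace ℝ (Fin 3) :=
  match j with
  | 0 => !₂[armR N * Real.cos (armPhi N (2 * k)),
           armR N * Real.sin (armPhi N (2 * k)),
           2 * n * armH N]
  | 1 => !₂[armR N * Real.cos (armBeta N - armAlpha N + armPhi N (2 * k)),
           armR N * Real.sin (armBeta N - armAlpha N + armPhi N (2 * k)),
           (2 * n + 1) * armH N]
  | 2 => !₂[armR N * Real.cos (armPhi N (2 * k + 1)),
           armR N * Real.sin (armPhi N (2 * k + 1)),
           (2 * n + 1) * armH N]
  | 3 => !₂[armR N * Real.cos (2 * armBeta N + armPhi N (2 * k)),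
           armR N * Real.sin (2 * armBeta N + armPhi N (2 * k)),
           2 * n * armH N]
  | 4 => !₂[armR N * Real.cos (armBeta N - armAlpha N + armPhi N (2 * k)),
           armR N * Real.sin (armBeta N - armAlpha N + armPhi N (2 * k)),
           (2 * n + 1) * armH N]
  | 5 => !₂[armR N * Real.cos (armPhi N (2 * k + 1)),
           armR N * Real.sin (armPhi N (2 * k + 1)),
           (2 * n + 1) * armH N]

/-- The edge vector `e_{n,j,k}` of the armchair graph `Γ^N`; `j : Fin 6`
encodes the index `j+1 ∈ {1,…,6}` of the paper. -/
noncomputable def armEdge (N : ℕ) (n : ℤ) (j : Fin 6) (k : ℤ) :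
    EuclideanSpace ℝ (Fin 3) :=
  match j with
  | 0 => armVertex N n 1 k - armVertex N n 0 k
  | 1 => armVertex N n 2 k - armVertex N n 1 k
  | 2 => armVertex N n 3 k - armVertex N n 2 k
  | 3 => armVertex N n 0 (k + 1) - armVertex N n 3 k
  | 4 => armVertex N (n + 1) 0 k - armVertex N n 4 k
  | 5 => armVertex N (n + 1) 3 k - armVertex N n 5 k

open Real Set

noncomputable def cylinderPoint (r θ z : ℝ) : EuclideanSpace ℝ (Fin 3) :=
  !₂[r * cos θ, r * sin θ, z]

theorem norm_cylinderPoint_sub_sq (r θ₁ θ₂ z₁ z₂ : ℝ) :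
    ‖cylinderPoint r θ₂ z₂ - cylinderPoint r θ₁ z₁‖ ^ 2 =
      2 * r ^ 2 * (1 - cos (θ₂ - θ₁)) + (z₂ - z₁) ^ 2 := by
  rw [EuclideanSpace.norm_sq_eq, Fin.sum_univ_three]
  simp only [cylinderPoint, PiLp.sub_apply, Matrix.cons_val_zero, Matrix.cons_val_one,
    Matrix.cons_val, norm_eq_abs, sq_abs, cos_sub, add_left_inj]
  linear_combination r ^ 2 * (sin_sq_add_cos_sq θ₁ + sin_sq_add_cos_sq θ₂)

theorem norm_cylinderPoint_sub_eq_one {r θ₁ θ₂ z₁ z₂ : ℝ}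
    (h : 2 * r ^ 2 * (1 - cos (θ₂ - θ₁)) + (z₂ - z₁) ^ 2 = 1) :
    ‖cylinderPoint r θ₂ z₂ - cylinderPoint r θ₁ z₁‖ = 1 := by
  rw [← pow_eq_one_iff_of_nonneg (norm_nonneg _) two_ne_zero, norm_cylinderPoint_sub_sq, h]

theorem mul_sin_arcsin_one_div {r : ℝ} (hr : 1 ≤ r) : r * sin (arcsin (1 / r)) = 1 := by
  have hr₀ : 0 < r := by linarith
  rw [sin_arcsin (by linarith [one_div_pos.2 hr₀]) ((div_le_one hr₀).2 hr)]
  field_simp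

theorem mul_cos_arcsin_one_div {r : ℝ} (hr : 1 ≤ r) :
    r * cos (arcsin (1 / r)) = √(r ^ 2 - 1) := by
  have hr₀ : 0 < r := by linarith
  rw [cos_arcsin, ← sqrt_sq hr₀.le, ← sqrt_mul (sq_nonneg r), sqrt_sq hr₀.le]
  congr 1
  field_simp

theorem pi_div_natCast_mem_Ioc {N : ℕ} (hN : 2 ≤ N) : π / N ∈ Ioc 0 (π / 2) := by
  have hN' : (2 : ℝ) ≤ N := by exact_mod_cast hN
  exact ⟨by positivity, div_le_div_of_nonneg_left pi_pos.le two_pos hN'⟩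

section Armchair

variable {N : ℕ} (hN : 2 ≤ N)
include hN

theorem sin_pi_div_pos : 0 < sin (π / N) :=
  have h := pi_div_natCast_mem_Ioc hN
  sin_pos_of_pos_of_lt_pi h.1 (by linarith [h.2, pi_pos])

theorem cos_pi_div_nonneg : 0 ≤ cos (π / N) :=
  have h := pi_div_natCast_mem_Ioc hN
  cos_nonneg_of_mem_Icc ⟨by linarith [h.1, pi_pos], h.2⟩

theorem armR_sq_mul_sin_sq : armR N ^ 2 * sin (π / N) ^ 2 = cos (π / N) + 5 / 4 := by
  have := sin_pi_div_pos hN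
  rw [armR, div_pow, sq_sqrt (by linarith [cos_pi_div_nonneg hN])]
  field_simp

theorem one_lt_armR : 1 < armR N := by
  have hs := sin_pi_div_pos hN
  have hc := cos_pi_div_nonneg hN
  have hR : 0 < armR N := div_pos (sqrt_pos.2 (by linarith)) hs
  nlinarith [armR_sq_mul_sin_sq hN, sin_sq_add_cos_sq (π / N)]

theorem sin_mul_armR1 : sin (π / N) * armR1 N = cos (π / N) + 1 / 2 := by
  have hs := sin_pi_div_pos hN
  have hc := cos_pi_div_nonneg hN
  rw [armR1, ← sqrt_sq hs.le, ← sqrt_mul (sq_nonneg _),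
    ← sqrt_sq (by linarith : 0 ≤ cos (π / N) + 1 / 2)]
  congr 1
  linear_combination armR_sq_mul_sin_sq hN - sin_sq_add_cos_sq (π / N)

theorem sin_mul_armR2 : sin (π / N) * armR2 N = cos (π / N) + 2 := by
  have hs := sin_pi_div_pos hN
  have hc := cos_pi_div_nonneg hN
  rw [armR2, ← sqrt_sq hs.le, ← sqrt_mul (sq_nonneg _),
    ← sqrt_sq (by linarith : 0 ≤ cos (π / N) + 2)]
  congr 1
  linear_combination 4 * armR_sq_mul_sin_sq hN - sin_sq_add_cos_sq (π / N)

theorem armR1_mul_armR2 : armR1 N * armR2 N = 2 * armR N ^ 2 * cos (π / N) + 1 := by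
  have hs := sin_pi_div_pos hN
  apply mul_left_cancel₀ (pow_ne_zero 2 hs.ne')
  linear_combination (sin (π / N) * armR2 N) * sin_mul_armR1 hN
    + (cos (π / N) + 1 / 2) * sin_mul_armR2 hN - sin_sq_add_cos_sq (π / N)
    - 2 * cos (π / N) * armR_sq_mul_sin_sq hN

theorem armH_sq : armH N ^ 2 = 2 + armR1 N * armR2 N - 2 * armR N ^ 2 := by
  refine sq_sqrt ?_
  have hs := sin_pi_div_pos hN
  have hc := cos_pi_div_nonneg hN
  have key : sin (π / N) ^ 2 * (2 + armR1 N * armR2 N - 2 * armR N ^ 2)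
      = (1 - cos (π / N)) * (1 + 2 * cos (π / N)) / 2 := by
    linear_combination sin (π / N) ^ 2 * armR1_mul_armR2 hN
      + 3 * sin_sq_add_cos_sq (π / N) - 2 * (1 - cos (π / N)) * armR_sq_mul_sin_sq hN
  refine (mul_nonneg_iff_of_pos_left (pow_pos hs 2)).1 (key ▸ ?_)
  have := cos_le_one (π / N)
  exact div_nonneg (mul_nonneg (by linarith) (by linarith)) two_pos.le

theorem armR_mul_sin_armBeta : armR N * sin (armBeta N) = 1 :=
  mul_sin_arcsin_one_div (one_lt_armR hN).le

theorem armR_mul_cos_armBeta : armR N * cos (armBeta N) = armR1 N :=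
  mul_cos_arcsin_one_div (one_lt_armR hN).le

theorem two_mul_armR_mul_sin_armAlpha : 2 * armR N * sin (armAlpha N) = 1 :=
  mul_sin_arcsin_one_div (by linarith [one_lt_armR hN])

theorem two_mul_armR_mul_cos_armAlpha : 2 * armR N * cos (armAlpha N) = armR2 N := by
  rw [armAlpha, mul_cos_arcsin_one_div (by linarith [one_lt_armR hN]), armR2]
  ring_nf

theorem armAlpha_add_armBeta : armAlpha N + armBeta N = π / N := by
  have hR := one_lt_armR hN
  have hcos : cos (armAlpha N + armBeta N) = cos (π / N) := by
    apply mul_left_cancel₀ (by positivity : (2 * armR N ^ 2 : ℝ) ≠ 0)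
    rw [cos_add]
    linear_combination (armR N * cos (armBeta N)) * two_mul_armR_mul_cos_armAlpha hN
      + armR2 N * armR_mul_cos_armBeta hN + armR1_mul_armR2 hN
      - (armR N * sin (armBeta N)) * two_mul_armR_mul_sin_armAlpha hN
      - armR_mul_sin_armBeta hN
  have hα : armAlpha N ∈ Icc 0 (π / 2) :=
    ⟨arcsin_nonneg.2 (by positivity), arcsin_le_pi_div_two _⟩
  have hβ : armBeta N ∈ Icc 0 (π / 2) :=
    ⟨arcsin_nonneg.2 (by positivity), arcsin_le_pi_div_two _⟩
  have hθ := pi_div_natCast_mem_Ioc hN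
  exact injOn_cos ⟨by linarith [hα.1, hβ.1], by linarith [hα.2, hβ.2]⟩
    ⟨hθ.1.le, by linarith [hθ.2, pi_pos]⟩ hcos

theorem armPhi_eq_mul (m : ℤ) : armPhi N m = m * (armAlpha N + armBeta N) := by
  rw [armPhi, armAlpha_add_armBeta hN, mul_div_assoc]

theorem norm_cylinderPoint_sub_eq_one_of_two_mul_armAlpha {θ₁ θ₂ : ℝ} (z : ℝ)
    (hθ : θ₂ - θ₁ = 2 * armAlpha N) :
    ‖cylinderPoint (armR N) θ₂ z - cylinderPoint (armR N) θ₁ z‖ = 1 := by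
  apply norm_cylinderPoint_sub_eq_one
  rw [hθ, sub_self, cos_two_mul, cos_sq']
  linear_combination (2 * armR N * sin (armAlpha N) + 1) * two_mul_armR_mul_sin_armAlpha hN

theorem norm_cylinderPoint_sub_eq_one_of_armBeta_sub_armAlpha {θ₁ θ₂ z₁ z₂ : ℝ}
    (hθ : θ₂ - θ₁ = armBeta N - armAlpha N) (hz : (z₂ - z₁) ^ 2 = armH N ^ 2) :
    ‖cylinderPoint (armR N) θ₂ z₂ - cylinderPoint (armR N) θ₁ z₁‖ = 1 := by
  apply norm_cylinderPoint_sub_eq_one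
  rw [hθ, hz, armH_sq hN, cos_sub]
  linear_combination -(2 * armR N * cos (armAlpha N)) * armR_mul_cos_armBeta hN
    - armR1 N * two_mul_armR_mul_cos_armAlpha hN
    - (2 * armR N * sin (armAlpha N)) * armR_mul_sin_armBeta hN
    - two_mul_armR_mul_sin_armAlpha hN

end Armchair

/-- Every edge of the armchair nanotube graph `Γ^N` has Euclidean length 1. -/
theorem armchair_edge_length_one (N : ℕ) (hN : 2 ≤ N) (n k : ℤ) (j : Fin 6) :
    ‖armEdge N n j k‖ = 1 := by
  have hφ := armPhi_eq_mul hN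
  have slanted := @norm_cylinderPoint_sub_eq_one_of_armBeta_sub_armAlpha N hN
  have horizontal := @norm_cylinderPoint_sub_eq_one_of_two_mul_armAlpha N hN
  fin_cases j
  · exact slanted (by ring) (by ring)
  · exact horizontal _ (by simp only [hφ]; push_cast; ring)
  · exact slanted (by simp only [hφ]; push_cast; ring) (by ring)
  · exact horizontal _ (by simp only [hφ]; push_cast; ring)
  · exact (norm_sub_rev _ _).trans (slanted (by ring) (by push_cast; ring))
  · exact slanted (by simp only [hφ]; push_cast; ring) (by push_cast; ring)
end

section
/- For every integer N ≥ 2, with R = √(cos(π/N) + 5/4)/sin(π/N), the angles α = arcsin(1/(2R)) and β = arcsin(1/R) satisfy 0 < α < β and α + β = π/N. -/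
open Real

noncomputable def armchairRadius (φ : ℝ) : ℝ :=
  √(cos φ + 5 / 4) / sin φ

theorem armR_eq_armchairRadius (N : ℕ) : armR N = armchairRadius (π / N) := rfl

theorem arcsin_inv_two_mul_lt_arcsin_inv {R : ℝ} (hR : 1 ≤ R) :
    arcsin (1 / (2 * R)) < arcsin (1 / R) :=
  arcsin_lt_arcsin (by linarith [one_div_pos.2 (show 0 < 2 * R by linarith)])
    (one_div_lt_one_div_of_lt (by linarith) (by linarith)) ((div_le_one (by linarith)).2 hR)

namespace armchairRadius

variable {φ : ℝ}

theorem pos (hs : 0 < sin φ) : 0 < armchairRadius φ :=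
  div_pos (sqrt_pos.2 (by linarith [neg_one_le_cos φ])) hs

theorem sq_mul_sin_sq (hs : sin φ ≠ 0) : armchairRadius φ ^ 2 * sin φ ^ 2 = cos φ + 5 / 4 := by
  rw [armchairRadius, div_pow, div_mul_cancel₀ _ (pow_ne_zero 2 hs),
    sq_sqrt (by linarith [neg_one_le_cos φ])]

theorem sq_mul_sin_sq_sub_sin_sq (hs : sin φ ≠ 0) :
    armchairRadius φ ^ 2 * sin φ ^ 2 - sin φ ^ 2 = (cos φ + 1 / 2) ^ 2 := by
  rw [sq_mul_sin_sq hs, sin_sq]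
  ring

theorem one_le (hs : 0 < sin φ) : 1 ≤ armchairRadius φ := by
  have key := sq_mul_sin_sq_sub_sin_sq hs.ne'
  have hsq : 1 ≤ armchairRadius φ ^ 2 :=
    le_of_mul_le_mul_right (by nlinarith [sq_nonneg (cos φ + 1 / 2)]) (pow_pos hs 2)
  exact (one_le_sq_iff₀ (pos hs).le).1 hsq

theorem cos_arcsin_inv (hs : 0 < sin φ) (hc : -(1 / 2) ≤ cos φ) :
    cos (arcsin (1 / armchairRadius φ)) = (cos φ + 1 / 2) / (sin φ * armchairRadius φ) := by
  have hR := pos hs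
  have key := sq_mul_sin_sq_sub_sin_sq hs.ne'
  have hsq : 1 - (1 / armchairRadius φ) ^ 2 = ((cos φ + 1 / 2) / (sin φ * armchairRadius φ)) ^ 2 := by
    field_simp
    linarith
  rw [cos_arcsin, hsq, sqrt_sq (div_nonneg (by linarith) (by positivity))]

theorem sin_sub_arcsin_inv (hs : 0 < sin φ) (hc : -(1 / 2) ≤ cos φ) :
    sin (φ - arcsin (1 / armchairRadius φ)) = 1 / (2 * armchairRadius φ) := by
  have hR := pos hs
  rw [sin_sub, cos_arcsin_inv hs hc, sin_arcsin (by linarith [one_div_pos.2 hR])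
    ((div_le_one hR).2 (one_le hs))]
  field_simp
  ring

theorem arcsin_inv_two_mul_add_arcsin_inv (h0 : 0 < φ) (hφ : φ ≤ π / 2) :
    arcsin (1 / (2 * armchairRadius φ)) + arcsin (1 / armchairRadius φ) = φ := by
  have hs : 0 < sin φ := sin_pos_of_pos_of_lt_pi h0 (by linarith [pi_pos])
  have hc : 0 ≤ cos φ := cos_nonneg_of_mem_Icc ⟨by linarith, hφ⟩
  have hβ0 : 0 ≤ arcsin (1 / armchairRadius φ) := arcsin_nonneg.2 (one_div_pos.2 (pos hs)).le
  have hβ := arcsin_le_pi_div_two (1 / armchairRadius φ)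
  rw [← sin_sub_arcsin_inv hs (by linarith), arcsin_sin (by linarith) (by linarith)]
  ring

end armchairRadius

/-- For every integer `N ≥ 2`, the angles `α = arcsin(1/(2R))` and `β = arcsin(1/R)`
satisfy `0 < α < β` and `α + β = π/N`. -/
theorem armchair_angle_identity (N : ℕ) (hN : 2 ≤ N) :
    0 < Real.arcsin (1 / (2 * armR N)) ∧
    Real.arcsin (1 / (2 * armR N)) < Real.arcsin (1 / armR N) ∧
    Real.arcsin (1 / (2 * armR N)) + Real.arcsin (1 / armR N) = Real.pi / N := by
  have hN2 : (2 : ℝ) ≤ N := by exact_mod_cast hN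
  have hφ0 : 0 < π / N := div_pos pi_pos (by linarith)
  have hφ : π / N ≤ π / 2 := div_le_div_of_nonneg_left pi_pos.le (by norm_num) hN2
  have hs : 0 < sin (π / N) := sin_pos_of_pos_of_lt_pi hφ0 (by linarith [pi_pos])
  rw [armR_eq_armchairRadius]
  exact ⟨arcsin_pos.2 (one_div_pos.2 (by linarith [armchairRadius.pos hs])),
    arcsin_inv_two_mul_lt_arcsin_inv (armchairRadius.one_le hs),
    armchairRadius.arcsin_inv_two_mul_add_arcsin_inv hφ0 hφ⟩
end

section
/- For every integer N ≥ 2, with R = √(cos(π/N) + 5/4)/sin(π/N), the identity √(R² − 1) · √(4R² − 1) = 2R² cos(π/N) + 1 holds; equivalently R₁R₂ = 2R² cos φ₁ + 1 and hence h² = 2 + R₁R₂ − 2R² = 3 − 2R²(1 − cos(π/N)) ≥ 0. -/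
/-!
With `c = cos φ`, `s = sin φ` and `R² = (c + 5/4)/s²`, the relation `s² + c² = 1` makes both
radicands perfect squares: `R² − 1 = ((c + 1/2)/s)²` and `4R² − 1 = ((c + 2)/s)²`. The identity
is then `(c + 1/2)(c + 2) = 2c(c + 5/4) + s²`, and `h² = (1 − c)(c + 1/2)/s²`, which is
nonnegative as soon as `c ≥ -1/2`, in particular for `φ = π/N` with `N ≥ 2`.
-/

open Real

namespace armchairRadius

variable {φ : ℝ}

theorem sq_eq : armchairRadius φ ^ 2 = (cos φ + 5 / 4) / sin φ ^ 2 := by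
  rw [armchairRadius, div_pow, sq_sqrt (by linarith [neg_one_le_cos φ])]

theorem sq_sub_one (hs : sin φ ≠ 0) :
    armchairRadius φ ^ 2 - 1 = ((cos φ + 1 / 2) / sin φ) ^ 2 := by
  rw [sq_eq]
  field_simp
  linear_combination -16 * sin_sq_add_cos_sq φ

theorem four_mul_sq_sub_one (hs : sin φ ≠ 0) :
    4 * armchairRadius φ ^ 2 - 1 = ((cos φ + 2) / sin φ) ^ 2 := by
  rw [sq_eq]
  field_simp
  linear_combination -sin_sq_add_cos_sq φ

theorem sqrt_sq_sub_one (hs : 0 < sin φ) (hc : -(1 / 2) ≤ cos φ) :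
    √(armchairRadius φ ^ 2 - 1) = (cos φ + 1 / 2) / sin φ := by
  rw [sq_sub_one hs.ne', sqrt_sq (div_nonneg (by linarith) hs.le)]

theorem sqrt_four_mul_sq_sub_one (hs : 0 < sin φ) :
    √(4 * armchairRadius φ ^ 2 - 1) = (cos φ + 2) / sin φ := by
  rw [four_mul_sq_sub_one hs.ne', sqrt_sq (div_nonneg (by linarith [neg_one_le_cos φ]) hs.le)]

theorem sqrt_mul_sqrt (hs : 0 < sin φ) (hc : -(1 / 2) ≤ cos φ) :
    √(armchairRadius φ ^ 2 - 1) * √(4 * armchairRadius φ ^ 2 - 1) =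
      2 * armchairRadius φ ^ 2 * cos φ + 1 := by
  rw [sqrt_sq_sub_one hs hc, sqrt_four_mul_sq_sub_one hs, sq_eq]
  field_simp
  linear_combination -8 * sin_sq_add_cos_sq φ

theorem three_sub_two_mul_sq_mul (hs : sin φ ≠ 0) :
    3 - 2 * armchairRadius φ ^ 2 * (1 - cos φ) = (1 - cos φ) * (cos φ + 1 / 2) / sin φ ^ 2 := by
  rw [sq_eq]
  field_simp
  linear_combination 24 * sin_sq_add_cos_sq φ

theorem three_sub_two_mul_sq_mul_nonneg (hs : sin φ ≠ 0) (hc : -(1 / 2) ≤ cos φ) :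
    0 ≤ 3 - 2 * armchairRadius φ ^ 2 * (1 - cos φ) := by
  rw [three_sub_two_mul_sq_mul hs]
  have := cos_le_one φ
  exact div_nonneg (mul_nonneg (by linarith) (by linarith)) (sq_nonneg _)

end armchairRadius

theorem sin_pi_div_natCast_pos {N : ℕ} (hN : 2 ≤ N) : 0 < sin (π / N) := by
  have hN' : (2 : ℝ) ≤ N := by exact_mod_cast hN
  exact sin_pos_of_pos_of_lt_pi (by positivity) (div_lt_self pi_pos (by linarith))

theorem cos_pi_div_natCast_nonneg {N : ℕ} (hN : 2 ≤ N) : 0 ≤ cos (π / N) := by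
  have hN' : (2 : ℝ) ≤ N := by exact_mod_cast hN
  have hpos : 0 < π / N := by positivity
  exact cos_nonneg_of_mem_Icc
    ⟨by linarith [pi_pos], div_le_div_of_nonneg_left pi_pos.le two_pos hN'⟩

/-- For every `N ≥ 2`: `√(R²−1)·√(4R²−1) = 2R²cos(π/N) + 1`, hence
`h² = 2 + R₁R₂ − 2R² = 3 − 2R²(1 − cos(π/N)) ≥ 0`. -/
theorem armchair_R1R2_identity (N : ℕ) (hN : 2 ≤ N) :
    Real.sqrt ((armR N) ^ 2 - 1) * Real.sqrt (4 * (armR N) ^ 2 - 1) =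
      2 * (armR N) ^ 2 * Real.cos (Real.pi / N) + 1 ∧
    2 + Real.sqrt ((armR N) ^ 2 - 1) * Real.sqrt (4 * (armR N) ^ 2 - 1) -
        2 * (armR N) ^ 2 =
      3 - 2 * (armR N) ^ 2 * (1 - Real.cos (Real.pi / N)) ∧
    0 ≤ 3 - 2 * (armR N) ^ 2 * (1 - Real.cos (Real.pi / N)) := by
  have hs := sin_pi_div_natCast_pos hN
  have hc : -(1 / 2) ≤ cos (π / N) := by linarith [cos_pi_div_natCast_nonneg hN]
  have hprod := armchairRadius.sqrt_mul_sqrt hs hc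
  rw [← armR_eq_armchairRadius] at hprod
  refine ⟨hprod, by rw [hprod]; ring, ?_⟩
  exact armchairRadius.three_sub_two_mul_sq_mul_nonneg hs.ne' hc
end

section
/- Let M be a 4×4 complex matrix satisfying Mᵀ J M = J. Then there exist complex numbers F₁, F₂ with F₁ + F₂ = (Tr M)/2 and F₁·F₂ = ((Tr M)² − Tr(M²) − 4)/8 such that for every τ ∈ ℂ one has det(M − τ·I₄) = (τ² − 2F₁τ + 1)(τ² − 2F₂τ + 1). -/
/-!
After relabelling the basis, `J` becomes Mathlib's standard symplectic form `Matrix.J (Fin 2) ℂ`,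
so `det M = 1`. Since `M⁻¹ = J⁻¹ Mᵀ J` is similar to `Mᵀ`, the matrices `M` and `M⁻¹` have the same
characteristic polynomial; together with `det M = 1` in even dimension this makes the
characteristic polynomial self-reciprocal, `τ⁴ - tτ³ + cτ² - tτ + 1` with `t = Tr M` and
`2c = t² - Tr (M²)` (the sum of the principal `2 × 2` minors). Such a quartic is
`(τ² - 2F₁τ + 1)(τ² - 2F₂τ + 1)` as soon as `F₁ + F₂ = t / 2` and `4F₁F₂ = c - 2`.
-/

/-- The matrix `J = [[0, j], [−j, 0]]` with `j = [[0,1],[1,0]]`. -/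
noncomputable def Jmat : Matrix (Fin 4) (Fin 4) ℂ :=
  Matrix.of ![![0, 0, 0, 1], ![0, 0, 1, 0], ![0, -1, 0, 0], ![-1, 0, 0, 0]]

open Polynomial Finset

namespace Matrix

variable {n R : Type*} [Fintype n] [DecidableEq n] [CommRing R]

theorem two_mul_det_of_card_eq_two (hn : Fintype.card n = 2) (A : Matrix n n R) :
    2 * A.det = A.trace ^ 2 - (A * A).trace := by
  nontriviality R
  have hCH := congrArg trace A.aeval_self_charpoly
  rw [charpoly_of_card_eq_two A hn] at hCH
  simp only [sq, map_add, aeval_sub, map_mul, aeval_X, aeval_C, Algebra.algebraMap_eq_smul_one,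
    Algebra.smul_mul_assoc, one_mul, trace_add, trace_sub, trace_smul, smul_eq_mul, trace_one, hn,
    Nat.cast_ofNat, trace_zero] at hCH
  linear_combination hCH

theorem two_mul_charpoly_coeff_card_sub_two (hn : 2 ≤ Fintype.card n) (M : Matrix n n R) :
    2 * M.charpoly.coeff (Fintype.card n - 2) = M.trace ^ 2 - (M * M).trace := by
  set h : n → n → R := fun a b => M a a * M b b - M a b * M b a
  have hminor : ∀ s ∈ univ.powersetCard 2,
      2 * (M.submatrix ((↑) : s → n) (↑)).det = ∑ a ∈ s, ∑ b ∈ s, h a b := by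
    intro s hs
    rw [two_mul_det_of_card_eq_two (by simpa using (mem_powersetCard.mp hs).2)]
    simp only [trace, Matrix.diag, submatrix_apply, mul_apply]
    rw [sum_coe_sort s (fun a => M a a), sum_coe_sort s (fun a => ∑ b : s, M a b * M b a)]
    simp only [h, sum_sub_distrib, sq, sum_mul_sum]
    congr 1
    exact sum_congr rfl fun a _ => sum_coe_sort s (fun b => M a b * M b a)
  -- An ordered pair `(a, b)` with `a ≠ b` lies in exactly one `2`-subset, and `h a a = 0`.
  have hpair (a b : n) :
      ∑ s ∈ univ.powersetCard 2, (if a ∈ s ∧ b ∈ s then h a b else 0) = h a b := by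
    obtain rfl | hab := eq_or_ne a b
    · simp [h]
    have hmem : {a, b} ∈ univ.powersetCard 2 :=
      mem_powersetCard.mpr ⟨subset_univ _, card_pair hab⟩
    rw [sum_eq_single_of_mem _ hmem, if_pos (by simp)]
    rintro s hs hne
    refine if_neg fun ⟨ha, hb⟩ => hne (eq_of_subset_of_card_le ?_ ?_).symm
    · simp [insert_subset_iff, ha, hb]
    · rw [(mem_powersetCard.mp hs).2, card_pair hab]
  calc 2 * M.charpoly.coeff (Fintype.card n - 2)
      = ∑ s ∈ univ.powersetCard 2, ∑ a ∈ s, ∑ b ∈ s, h a b := by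
        rw [charpoly_coeff_eq_sum_minors M 2 hn, neg_one_sq, one_mul, mul_sum]
        exact sum_congr rfl hminor
    _ = ∑ s ∈ univ.powersetCard 2, ∑ a, ∑ b, if a ∈ s ∧ b ∈ s then h a b else 0 := by
        simp [ite_and]
    _ = ∑ a, ∑ b, h a b := by
        rw [sum_comm]
        exact sum_congr rfl fun a _ => by rw [sum_comm]; exact sum_congr rfl fun b _ => hpair a b
    _ = M.trace ^ 2 - (M * M).trace := by
        simp only [h, trace, Matrix.diag, mul_apply, sum_sub_distrib, sq, sum_mul_sum]

theorem det_sub_smul_one_eq_eval_charpoly (hn : Even (Fintype.card n)) (M : Matrix n n R)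
    (τ : R) : (M - τ • (1 : Matrix n n R)).det = M.charpoly.eval τ := by
  rw [eval_charpoly, ← neg_sub, det_neg, hn.neg_one_pow, one_mul, scalar_apply,
    smul_one_eq_diagonal]

theorem charpoly_reverse_of_transpose_mul_mul_eq {J M : Matrix n n R} (hJ : IsUnit J)
    (hM : Mᵀ * J * M = J) (hdet : M.det = 1) (hn : Even (Fintype.card n)) :
    M.charpoly.reverse = M.charpoly := by
  obtain ⟨u, rfl⟩ := hJ
  have hinv : M⁻¹ = (u : Matrix n n R)⁻¹ * Mᵀ * u :=
    inv_eq_left_inv <| by rw [mul_assoc, mul_assoc, ← mul_assoc Mᵀ, hM, ← coe_units_inv, u.inv_mul]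
  have hunit : IsUnit M := (isUnit_iff_isUnit_det M).mpr (hdet ▸ isUnit_one)
  rw [reverse_charpoly, ← charpoly_transpose M, ← charpoly_units_conj' u, ← hinv,
    charpoly_inv M hunit, hdet, Ring.inverse_one, hn.neg_one_pow, map_one, one_mul, one_mul]

theorem det_eq_one_of_transpose_mul_mul_eq {l : Type*} [Fintype l] [DecidableEq l]
    (e : l ⊕ l ≃ n) {J M : Matrix n n R} (hJ : J.submatrix e e = Matrix.J l R)
    (hM : Mᵀ * J * M = J) : M.det = 1 := by
  have hsymp : M.submatrix e e ∈ symplecticGroup l R := by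
    rw [SymplecticGroup.mem_iff', ← hJ, transpose_submatrix, submatrix_mul_equiv,
      submatrix_mul_equiv, hM]
  rw [← det_submatrix_equiv_self e M]
  exact SymplecticGroup.det_eq_one hsymp

theorem two_mul_eval_charpoly_of_reverse_eq [Nontrivial R] {M : Matrix (Fin 4) (Fin 4) R}
    (h : M.charpoly.reverse = M.charpoly) (τ : R) :
    2 * M.charpoly.eval τ = 2 * τ ^ 4 - 2 * M.trace * τ ^ 3 +
      (M.trace ^ 2 - (M * M).trace) * τ ^ 2 - 2 * M.trace * τ + 2 := by
  have hdeg : M.charpoly.natDegree = 4 := by simp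
  have hsymm (k : ℕ) (hk : k ≤ 4) : M.charpoly.coeff k = M.charpoly.coeff (4 - k) := by
    conv_lhs => rw [← h, coeff_reverse, hdeg, revAt_le hk]
  have c4 : M.charpoly.coeff 4 = 1 := by rw [← M.charpoly_monic.coeff_natDegree, hdeg]
  have c3 : M.charpoly.coeff 3 = -M.trace := by
    simpa using congrArg Neg.neg (trace_eq_neg_charpoly_coeff M).symm
  have c2 : 2 * M.charpoly.coeff 2 = M.trace ^ 2 - (M * M).trace :=
    two_mul_charpoly_coeff_card_sub_two (by simp) M
  have c1 : M.charpoly.coeff 1 = -M.trace := (hsymm 1 (by norm_num)).trans c3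
  have c0 : M.charpoly.coeff 0 = 1 := (hsymm 0 (by norm_num)).trans c4
  rw [eval_eq_sum_range, hdeg]
  simp only [sum_range_succ, sum_range_zero, c0, c1, c3, c4]
  linear_combination τ ^ 2 * c2

end Matrix

theorem exists_add_eq_and_mul_eq {K : Type*} [Field K] [IsAlgClosed K] (a b : K) :
    ∃ x y : K, x + y = a ∧ x * y = b := by
  obtain ⟨x, hx⟩ := IsAlgClosed.exists_root (X ^ 2 - C a * X + C b)
    (by rw [show (X ^ 2 - C a * X + C b : K[X]).degree = 2 by compute_degree!]; decide)
  obtain ⟨y, -, hxy⟩ := vieta_formula_quadratic (b := a) (c := b) (x := x) (by simpa [sq] using hx)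
  exact ⟨x, y, hxy⟩

open Matrix

theorem exists_equiv_submatrix_Jmat_eq_J :
    ∃ e : Fin 2 ⊕ Fin 2 ≃ Fin 4, Jmat.submatrix e e = J (Fin 2) ℂ := by
  refine ⟨Equiv.ofBijective (Sum.elim ![3, 2] ![0, 1]) (by decide), ?_⟩
  ext (i | i) (j | j) <;> fin_cases i <;> fin_cases j <;> simp [Jmat, J]

/-- If `Mᵀ J M = J` then there are `F₁, F₂` with `F₁ + F₂ = Tr M / 2` and
`F₁F₂ = ((Tr M)² − Tr(M²) − 4)/8` such that
`det(M − τI₄) = (τ² − 2F₁τ + 1)(τ² − 2F₂τ + 1)` for all `τ`. -/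
theorem charpoly_factorization_of_J_symplectic (M : Matrix (Fin 4) (Fin 4) ℂ)
    (hM : M.transpose * Jmat * M = Jmat) :
    ∃ F₁ F₂ : ℂ, F₁ + F₂ = M.trace / 2 ∧
      F₁ * F₂ = (M.trace ^ 2 - (M * M).trace - 4) / 8 ∧
      ∀ τ : ℂ, (M - τ • (1 : Matrix (Fin 4) (Fin 4) ℂ)).det =
        (τ ^ 2 - 2 * F₁ * τ + 1) * (τ ^ 2 - 2 * F₂ * τ + 1) := by
  obtain ⟨e, he⟩ := exists_equiv_submatrix_Jmat_eq_J
  have hJ : IsUnit Jmat := (isUnit_iff_isUnit_det _).mpr <| by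
    rw [← det_submatrix_equiv_self e, he]
    exact isUnit_det_J _ _
  have hrev : M.charpoly.reverse = M.charpoly := charpoly_reverse_of_transpose_mul_mul_eq hJ hM
    (det_eq_one_of_transpose_mul_mul_eq e he hM) (by decide)
  obtain ⟨F₁, F₂, hsum, hprod⟩ :=
    exists_add_eq_and_mul_eq (M.trace / 2) ((M.trace ^ 2 - (M * M).trace - 4) / 8)
  refine ⟨F₁, F₂, hsum, hprod, fun τ => ?_⟩
  rw [det_sub_smul_one_eq_eval_charpoly (by decide) M τ]
  linear_combination (1 / 2 : ℂ) * two_mul_eval_charpoly_of_reverse_eq hrev τ +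
    2 * (τ ^ 3 + τ) * hsum - 4 * τ ^ 2 * hprod
end

section
/- Let F, F₋, c, s be real numbers with c² + s² = 1. Define ξ = (9F² − F₋² − 1)/2 − s² and ρ = (9F² − s²)c² + s²·F₋². Define T₀ = 2(9F² − F₋² − 1), T₁ = T₀ − 4s², S₀ = 72F² + T₀²/2 − 4, and T₂ = S₀ − 8s²·T₀ − 16s²c². Then 4ξ = T₁ and 8(ξ² − ρ) = T₁² − T₂ − 4. Consequently, for every τ ∈ ℂ, if ρ ≥ 0 then τ⁴ − T₁τ³ + ((T₁² − T₂)/2)τ² − T₁τ + 1 = (τ² − 2(ξ + √ρ)τ + 1)(τ² − 2(ξ − √ρ)τ + 1). -/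
/-! The quartic is self-reciprocal, so it splits into two self-reciprocal quadratics
`τ² − 2aτ + 1`, `τ² − 2bτ + 1` as soon as `2(a + b) = T₁` and `4ab + 2 = (T₁² − T₂)/2`.
With `a, b = ξ ± √ρ` these conditions read `4ξ = T₁` and `8(ξ² − ρ) = T₁² − T₂ − 4`,
and both are polynomial identities in `F, F₋, s, c` modulo `c² + s² = 1`. -/

theorem mul_reciprocal_quadratics {R : Type*} [CommRing R] (a b τ : R) :
    (τ ^ 2 - 2 * a * τ + 1) * (τ ^ 2 - 2 * b * τ + 1) =
      τ ^ 4 - 2 * (a + b) * τ ^ 3 + (4 * a * b + 2) * τ ^ 2 - 2 * (a + b) * τ + 1 := by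
  ring

/-- Algebraic core of identity (1.11): the Lyapunov branches `ξ ± √ρ` factor the
self-reciprocal polynomial built from the traces `T₁ = Tr M_k`, `T₂ = Tr M_k²`. -/
theorem lyapunov_trace_identities (F Fm c s ξ ρ T₀ T₁ S₀ T₂ : ℝ)
    (hcs : c ^ 2 + s ^ 2 = 1)
    (hξ : ξ = (9 * F ^ 2 - Fm ^ 2 - 1) / 2 - s ^ 2)
    (hρ : ρ = (9 * F ^ 2 - s ^ 2) * c ^ 2 + s ^ 2 * Fm ^ 2)
    (hT₀ : T₀ = 2 * (9 * F ^ 2 - Fm ^ 2 - 1))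
    (hT₁ : T₁ = T₀ - 4 * s ^ 2)
    (hS₀ : S₀ = 72 * F ^ 2 + T₀ ^ 2 / 2 - 4)
    (hT₂ : T₂ = S₀ - 8 * s ^ 2 * T₀ - 16 * s ^ 2 * c ^ 2) :
    4 * ξ = T₁ ∧ 8 * (ξ ^ 2 - ρ) = T₁ ^ 2 - T₂ - 4 ∧
      ∀ τ : ℂ, 0 ≤ ρ →
        τ ^ 4 - (T₁ : ℂ) * τ ^ 3 + (((T₁ ^ 2 - T₂) / 2 : ℝ) : ℂ) * τ ^ 2
            - (T₁ : ℂ) * τ + 1 =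
          (τ ^ 2 - 2 * ((ξ : ℂ) + (Real.sqrt ρ : ℂ)) * τ + 1) *
            (τ ^ 2 - 2 * ((ξ : ℂ) - (Real.sqrt ρ : ℂ)) * τ + 1) := by
  have htrace : 4 * ξ = T₁ := by
    rw [hT₁, hT₀, hξ]
    ring
  have hdisc : 8 * (ξ ^ 2 - ρ) = T₁ ^ 2 - T₂ - 4 := by
    rw [hT₂, hS₀, hT₁, hT₀, hξ, hρ]
    linear_combination (-72 * F ^ 2 - 8 * s ^ 2) * hcs
  refine ⟨htrace, hdisc, fun τ hρ₀ => ?_⟩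
  have hsqrt : (Real.sqrt ρ : ℂ) ^ 2 = ρ := by exact_mod_cast Real.sq_sqrt hρ₀
  have hmiddle : (T₁ ^ 2 - T₂) / 2 = 4 * (ξ ^ 2 - ρ) + 2 := by linarith
  rw [mul_reciprocal_quadratics, hmiddle, ← htrace]
  push_cast
  linear_combination (4 * τ ^ 2) * hsqrt
end

section
/- Let F, F₋, c, s be real numbers with c² + s² = 1. Define ξ = (9F² − F₋² − 1)/2 − s², ρ = (9F² − s²)c² + s²·F₋², g₁ = 5 + F₋² − 2√(F₋² + 4c²) and g₂ = 5 + F₋² + 2√(F₋² + 4c²). Then 4((ξ − 1)² − ρ) = (9F² − g₁)(9F² − g₂). Equivalently, when ρ ≥ 0, the quantity D⁺ = 4(F₁ − 1)(F₂ − 1) with F₁ = ξ + √ρ, F₂ = ξ − √ρ equals (9F² − g₁)(9F² − g₂). -/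
/-! Both sides are differences of squares. On the circle `c² + s² = 1` one has
`2(ξ - 1) = (9F² - 5 - F₋²) + 2c²`, and expanding gives
`4((ξ - 1)² - ρ) = (9F² - 5 - F₋²)² - 4(F₋² + 4c²)`, which is exactly the product
`(9F² - g₁)(9F² - g₂)` since `g₁, g₂ = 5 + F₋² ∓ 2√(F₋² + 4c²)`. -/

lemma Real.add_sqrt_mul_sub_sqrt (a : ℝ) {r : ℝ} (hr : 0 ≤ r) :
    (a + √r) * (a - √r) = a ^ 2 - r := by
  rw [← sq_sub_sq, Real.sq_sqrt hr]

lemma Real.sub_sub_two_mul_sqrt_mul_sub_add_two_mul_sqrt (x a : ℝ) {t : ℝ} (ht : 0 ≤ t) :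
    (x - (a - 2 * √t)) * (x - (a + 2 * √t)) = (x - a) ^ 2 - 4 * t := by
  linear_combination (-4) * Real.sq_sqrt ht

lemma four_mul_hill_discriminant_eq (F Fm c s : ℝ) (hcs : c ^ 2 + s ^ 2 = 1) :
    4 * ((((9 * F ^ 2 - Fm ^ 2 - 1) / 2 - s ^ 2) - 1) ^ 2 -
        ((9 * F ^ 2 - s ^ 2) * c ^ 2 + s ^ 2 * Fm ^ 2)) =
      (9 * F ^ 2 - (5 + Fm ^ 2)) ^ 2 - 4 * (Fm ^ 2 + 4 * c ^ 2) := by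
  linear_combination (16 + 4 * s ^ 2 - 36 * F ^ 2) * hcs

/-- Pointwise identity behind (2.10)–(2.11): `D⁺ = 4(F₁−1)(F₂−1) = (9F²−g₁)(9F²−g₂)`. -/
theorem Dplus_factorization (F Fm c s ξ ρ g₁ g₂ : ℝ)
    (hcs : c ^ 2 + s ^ 2 = 1)
    (hξ : ξ = (9 * F ^ 2 - Fm ^ 2 - 1) / 2 - s ^ 2)
    (hρ : ρ = (9 * F ^ 2 - s ^ 2) * c ^ 2 + s ^ 2 * Fm ^ 2)
    (hg₁ : g₁ = 5 + Fm ^ 2 - 2 * Real.sqrt (Fm ^ 2 + 4 * c ^ 2))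
    (hg₂ : g₂ = 5 + Fm ^ 2 + 2 * Real.sqrt (Fm ^ 2 + 4 * c ^ 2)) :
    4 * ((ξ - 1) ^ 2 - ρ) = (9 * F ^ 2 - g₁) * (9 * F ^ 2 - g₂) ∧
    (0 ≤ ρ →
      4 * ((ξ + Real.sqrt ρ) - 1) * ((ξ - Real.sqrt ρ) - 1) =
        (9 * F ^ 2 - g₁) * (9 * F ^ 2 - g₂)) := by
  have hdisc : 4 * ((ξ - 1) ^ 2 - ρ) = (9 * F ^ 2 - g₁) * (9 * F ^ 2 - g₂) := by
    rw [hξ, hρ, hg₁, hg₂, four_mul_hill_discriminant_eq F Fm c s hcs,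
      Real.sub_sub_two_mul_sqrt_mul_sub_add_two_mul_sqrt _ _ (by positivity)]
  refine ⟨hdisc, fun hρ_nonneg => ?_⟩
  rw [mul_assoc, add_sub_right_comm, sub_right_comm ξ,
    Real.add_sqrt_mul_sub_sqrt _ hρ_nonneg, hdisc]
end

section
/- Let F, F₋, c, s be real numbers with c² + s² = 1. Define ξ = (9F² − F₋² − 1)/2 − s², ρ = (9F² − s²)c² + s²·F₋², h₁ = (1 − |F₋|)² and h₂ = (1 + |F₋|)². Then 4((ξ + 1)² − ρ) = (9F² − h₁)(9F² − h₂). Equivalently, when ρ ≥ 0, the quantity D⁻ = 4(F₁ + 1)(F₂ + 1) with F₁ = ξ + √ρ, F₂ = ξ − √ρ equals (9F² − h₁)(9F² − h₂); in particular this expression does not depend on c and s separately. -/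
/-! The `s`-dependence cancels once `c² = 1 - s²` is substituted: with `X = 9F²`, both sides equal
`(X + 1 - F₋²)² - 4X`, and the right-hand side is the difference of squares
`(X - 1 - F₋²)² - (2|F₋|)²` split into two factors. The second statement follows because
`(ξ + √ρ + 1)(ξ - √ρ + 1) = (ξ + 1)² - ρ` for `ρ ≥ 0`. -/

lemma add_sqrt_add_one_mul_sub_sqrt_add_one (x : ℝ) {ρ : ℝ} (hρ : 0 ≤ ρ) :
    (x + √ρ + 1) * (x - √ρ + 1) = (x + 1) ^ 2 - ρ := by
  linear_combination -Real.sq_sqrt hρ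

lemma sq_add_one_sub_sq_sub_four_mul (X a : ℝ) :
    (X + 1 - a ^ 2) ^ 2 - 4 * X = (X - (1 - |a|) ^ 2) * (X - (1 + |a|) ^ 2) := by
  linear_combination (2 * X + 2 - a ^ 2 - |a| ^ 2) * sq_abs a

lemma four_mul_sq_add_one_sub_of_sq_add_sq {X a c s ξ ρ : ℝ} (hcs : c ^ 2 + s ^ 2 = 1)
    (hξ : ξ = (X - a ^ 2 - 1) / 2 - s ^ 2) (hρ : ρ = (X - s ^ 2) * c ^ 2 + s ^ 2 * a ^ 2) :
    4 * ((ξ + 1) ^ 2 - ρ) = (X + 1 - a ^ 2) ^ 2 - 4 * X := by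
  subst hξ hρ
  linear_combination (4 * s ^ 2 - 4 * X) * hcs

/-- Pointwise identity behind (2.10)–(2.11): `D⁻ = 4(F₁+1)(F₂+1) = (9F²−h₁)(9F²−h₂)`,
which does not depend on `c` and `s` separately. -/
theorem Dminus_factorization (F Fm c s ξ ρ h₁ h₂ : ℝ)
    (hcs : c ^ 2 + s ^ 2 = 1)
    (hξ : ξ = (9 * F ^ 2 - Fm ^ 2 - 1) / 2 - s ^ 2)
    (hρ : ρ = (9 * F ^ 2 - s ^ 2) * c ^ 2 + s ^ 2 * Fm ^ 2)
    (hh₁ : h₁ = (1 - |Fm|) ^ 2)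
    (hh₂ : h₂ = (1 + |Fm|) ^ 2) :
    4 * ((ξ + 1) ^ 2 - ρ) = (9 * F ^ 2 - h₁) * (9 * F ^ 2 - h₂) ∧
    (0 ≤ ρ →
      4 * ((ξ + Real.sqrt ρ) + 1) * ((ξ - Real.sqrt ρ) + 1) =
        (9 * F ^ 2 - h₁) * (9 * F ^ 2 - h₂)) := by
  have hdisc : 4 * ((ξ + 1) ^ 2 - ρ) = (9 * F ^ 2 - h₁) * (9 * F ^ 2 - h₂) := by
    rw [four_mul_sq_add_one_sub_of_sq_add_sq hcs hξ hρ, sq_add_one_sub_sq_sub_four_mul, hh₁, hh₂]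
  refine ⟨hdisc, fun hρ₀ => ?_⟩
  rw [mul_assoc, add_sqrt_add_one_mul_sub_sqrt_add_one ξ hρ₀, hdisc]
end

section
/- Let F, F₋, c, s be real numbers with c² + s² = 1, and define ξ = (9F² − F₋² − 1)/2 − s², ρ = (9F² − s²)c² + s²·F₋², g₁ = 5 + F₋² − 2√(F₋² + 4c²). Assume ρ > 0. Then ξ + √ρ < 1 if and only if 9F² < g₁. -/
/-!
Put `u = (5 + Fm² - 9F²)/2`, `t = c²` and `D = Fm² + 4c²`. Using `s² = 1 - c²`, one gets
`1 - ξ = u - t` and `ρ = (u - t)² - (u² - D)`, while `9F² < g₁` says `√D < u`.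
So both sides compare `u²` with `D`; they differ only in the sign condition (`u > t` versus
`u > 0`), and these agree because `t² ≤ D`.
-/

namespace Real

lemma sqrt_lt_iff_pos_and_lt_sq {x y : ℝ} : √x < y ↔ 0 < y ∧ x < y ^ 2 := by
  constructor
  · intro h
    have hy : 0 < y := (sqrt_nonneg x).trans_lt h
    exact ⟨hy, (sqrt_lt' hy).1 h⟩
  · rintro ⟨hy, h⟩
    exact (sqrt_lt' hy).2 h

lemma sqrt_sub_lt_sub_iff {D u t : ℝ} (ht : 0 ≤ t) (htD : t ^ 2 ≤ D) :
    √(D - 2 * u * t + t ^ 2) < u - t ↔ √D < u := by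
  simp only [sqrt_lt_iff_pos_and_lt_sq]
  constructor
  · rintro ⟨hut, h⟩
    exact ⟨by linarith, by nlinarith⟩
  · rintro ⟨hu, h⟩
    have hut : t < u := by nlinarith
    exact ⟨by linarith, by nlinarith⟩

end Real

theorem lyapunov_branch1_lt_one_general (F Fm c s ξ ρ g₁ : ℝ)
    (hcs : c ^ 2 + s ^ 2 = 1)
    (hξ : ξ = (9 * F ^ 2 - Fm ^ 2 - 1) / 2 - s ^ 2)
    (hρ : ρ = (9 * F ^ 2 - s ^ 2) * c ^ 2 + s ^ 2 * Fm ^ 2)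
    (hg₁ : g₁ = 5 + Fm ^ 2 - 2 * Real.sqrt (Fm ^ 2 + 4 * c ^ 2)) :
    ξ + Real.sqrt ρ < 1 ↔ 9 * F ^ 2 < g₁ := by
  set u := (5 + Fm ^ 2 - 9 * F ^ 2) / 2 with hu
  set D := Fm ^ 2 + 4 * c ^ 2
  have hs : s ^ 2 = 1 - c ^ 2 := by linarith
  have hρ' : ρ = D - 2 * u * c ^ 2 + (c ^ 2) ^ 2 := by rw [hρ, hs]; ring
  have hc : c ^ 2 ≤ 1 := by nlinarith [sq_nonneg s]
  have htD : (c ^ 2) ^ 2 ≤ D := by nlinarith [sq_nonneg Fm, sq_nonneg c]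
  calc ξ + √ρ < 1 ↔ √ρ < u - c ^ 2 := by
        rw [hξ, hs]; constructor <;> intro h <;> linarith [hu]
    _ ↔ √D < u := by rw [hρ']; exact Real.sqrt_sub_lt_sub_iff (sq_nonneg c) htD
    _ ↔ 9 * F ^ 2 < g₁ := by rw [hg₁]; constructor <;> intro h <;> linarith [hu]

/-- Lemma 3.1, case ν = 1 of relation (3.1): `F₁ = ξ + √ρ < 1` iff `9F² < g₁`. -/
theorem lyapunov_branch1_lt_one (F Fm c s ξ ρ g₁ : ℝ)
    (hcs : c ^ 2 + s ^ 2 = 1)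
    (hξ : ξ = (9 * F ^ 2 - Fm ^ 2 - 1) / 2 - s ^ 2)
    (hρ : ρ = (9 * F ^ 2 - s ^ 2) * c ^ 2 + s ^ 2 * Fm ^ 2)
    (hg₁ : g₁ = 5 + Fm ^ 2 - 2 * Real.sqrt (Fm ^ 2 + 4 * c ^ 2))
    (hρpos : 0 < ρ) :
    ξ + Real.sqrt ρ < 1 ↔ 9 * F ^ 2 < g₁ :=
  lyapunov_branch1_lt_one_general F Fm c s ξ ρ g₁ hcs hξ hρ hg₁
end

section
/- Let F, F₋, c, s be real numbers with c² + s² = 1, and define ξ = (9F² − F₋² − 1)/2 − s², ρ = (9F² − s²)c² + s²·F₋², g₂ = 5 + F₋² + 2√(F₋² + 4c²). Assume ρ > 0. Then ξ − √ρ < 1 if and only if 9F² < g₂. -/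
/-! With `a = ξ - 1`, `v = (9F² - Fm² - 5)/2` and `t = √(Fm² + 4c²)` the condition `9F² < g₂`
reads `v < t`, and `s² = 1 - c²` gives `a = v + c²` and `ρ = a² + (t - v)(t + v)`.
Since `c⁴ ≤ c² ≤ Fm² + 4c²` we have `c² ≤ t`. If `t ≤ v` then `a ≥ 0` and `ρ ≤ a²`, so `√ρ ≤ a`.
If `v < t`, either `a < 0 ≤ √ρ`, or `a ≥ 0` forces `t + v > 0` (as `ρ > 0`), so `a² < ρ`. -/

namespace Real

theorem lt_sqrt_iff_of_eq_add_sq_sub_sq {a b v t ρ : ℝ} (hb : 0 ≤ b) (hbt : b ≤ t)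
    (ha : a = v + b) (hρ : ρ = a ^ 2 + t ^ 2 - v ^ 2) (hρpos : 0 < ρ) :
    a < √ρ ↔ v < t := by
  constructor
  · intro hlt
    by_contra! htv
    have ha0 : 0 ≤ a := by linarith
    have hρa : ρ ≤ a ^ 2 := by
      nlinarith [mul_nonneg (sub_nonneg.mpr htv) (by linarith : 0 ≤ t + v)]
    exact (sqrt_le_left ha0).mpr hρa |>.not_gt hlt
  · intro hvt
    rcases lt_or_ge a 0 with ha0 | ha0
    · exact ha0.trans_le (sqrt_nonneg ρ)
    · have hsum : 0 < t + v := by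
        by_contra! hsum
        have ha' : a = 0 := by linarith
        nlinarith [mul_nonneg (sub_pos.mpr hvt).le (neg_nonneg.mpr hsum)]
      exact lt_sqrt_of_sq_lt (by nlinarith [mul_pos (sub_pos.mpr hvt) hsum])

theorem sq_le_sqrt_add_four_mul_sq {c d : ℝ} (hc : c ^ 2 ≤ 1) :
    c ^ 2 ≤ √(d ^ 2 + 4 * c ^ 2) :=
  le_sqrt_of_sq_le (by nlinarith [sq_nonneg c, sq_nonneg d])

end Real

/-- Lemma 3.1, case ν = 2 of relation (3.1): `F₂ = ξ − √ρ < 1` iff `9F² < g₂`. -/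
theorem lyapunov_branch2_lt_one (F Fm c s ξ ρ g₂ : ℝ)
    (hcs : c ^ 2 + s ^ 2 = 1)
    (hξ : ξ = (9 * F ^ 2 - Fm ^ 2 - 1) / 2 - s ^ 2)
    (hρ : ρ = (9 * F ^ 2 - s ^ 2) * c ^ 2 + s ^ 2 * Fm ^ 2)
    (hg₂ : g₂ = 5 + Fm ^ 2 + 2 * Real.sqrt (Fm ^ 2 + 4 * c ^ 2))
    (hρpos : 0 < ρ) :
    ξ - Real.sqrt ρ < 1 ↔ 9 * F ^ 2 < g₂ := by
  set t := √(Fm ^ 2 + 4 * c ^ 2)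
  set v := (9 * F ^ 2 - Fm ^ 2 - 5) / 2
  have ht : t ^ 2 = Fm ^ 2 + 4 * c ^ 2 := Real.sq_sqrt (by positivity)
  have hct : c ^ 2 ≤ t := Real.sq_le_sqrt_add_four_mul_sq (by nlinarith [sq_nonneg s])
  have ha : ξ - 1 = v + c ^ 2 := by rw [hξ]; linear_combination -hcs
  have hρ' : ρ = (ξ - 1) ^ 2 + t ^ 2 - v ^ 2 := by
    rw [hρ, ha, ht]; linear_combination (Fm ^ 2 - c ^ 2) * hcs
  have key := Real.lt_sqrt_iff_of_eq_add_sq_sub_sq (sq_nonneg c) hct ha hρ' hρpos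
  constructor
  · intro h; linarith [key.mp (by linarith)]
  · intro h; linarith [key.mpr (by linarith)]
end

section
/- Let F, F₋, c, s be real numbers with c² + s² = 1, and define ξ = (9F² − F₋² − 1)/2 − s², ρ = (9F² − s²)c² + s²·F₋², h₁ = (1 − |F₋|)². Assume ρ > 0. Then ξ + √ρ > −1 if and only if (9F² > h₁ or |F₋| < c²). -/
/-!
Put `T = -1 - ξ`, `m = |F₋|`, `a = 9F²`, `C = c²`. The claim is `T < √ρ`, i.e. `T < 0` or
`T² < ρ`, and `ρ - T² = P Q / 4` with `P = a - (1 - m)²`, `Q = (1 + m)² - a`. Since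
`P + Q = 4m ≥ 0`, for `T ≥ 0` the product is positive exactly when `P > 0`. Moreover
`T = m - C - P / 2`, so `T < 0` forces `P > 0` or `m < C`, while `T ≥ 0` together with `m < C`
would force `ρ ≤ m² - C² < 0`.
-/

theorem Real.lt_sqrt_iff_neg_or_sq_lt {x y : ℝ} : x < √y ↔ x < 0 ∨ x ^ 2 < y := by
  rcases lt_or_ge x 0 with hx | hx
  · simp [hx, hx.trans_le (Real.sqrt_nonneg y)]
  · simp [Real.lt_sqrt hx, hx.not_gt]

section
variable {m a C : ℝ}

theorem discr_sub_sq_eq :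
    (a - (1 - C)) * C + (1 - C) * m ^ 2 - ((m ^ 2 + 1 - a) / 2 - C) ^ 2
      = (a - (1 - m) ^ 2) * ((1 + m) ^ 2 - a) / 4 := by
  ring

theorem neg_or_sq_lt_discr_iff (hm : 0 ≤ m) (hC : 0 ≤ C)
    (hρ : 0 < (a - (1 - C)) * C + (1 - C) * m ^ 2) :
    (m ^ 2 + 1 - a) / 2 - C < 0 ∨
        ((m ^ 2 + 1 - a) / 2 - C) ^ 2 < (a - (1 - C)) * C + (1 - C) * m ^ 2 ↔
      (1 - m) ^ 2 < a ∨ m < C := by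
  rw [← sub_pos (b := ((m ^ 2 + 1 - a) / 2 - C) ^ 2), discr_sub_sq_eq]
  constructor
  · contrapose!
    rintro ⟨hP, hCm⟩
    have hQ : 0 ≤ (1 + m) ^ 2 - a := by nlinarith
    refine ⟨by nlinarith, ?_⟩
    exact div_nonpos_of_nonpos_of_nonneg
      (mul_nonpos_of_nonpos_of_nonneg (sub_nonpos.2 hP) hQ) zero_le_four
  · intro h
    rcases lt_or_ge ((m ^ 2 + 1 - a) / 2 - C) 0 with hT | hT
    · exact Or.inl hT
    right
    rcases h with hP | hmC
    · have hQ : 0 < (1 + m) ^ 2 - a := by nlinarith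
      exact div_pos (mul_pos (sub_pos.2 hP) hQ) four_pos
    · have : (a - (1 - C)) * C + (1 - C) * m ^ 2 ≤ m ^ 2 - C ^ 2 := by nlinarith
      nlinarith
end

/-- Lemma 3.1, relation (3.2): `F₁ = ξ + √ρ > −1` iff `9F² > h₁` or `|F₋| < c²`. -/
theorem lyapunov_branch1_gt_negone (F Fm c s ξ ρ h₁ : ℝ)
    (hcs : c ^ 2 + s ^ 2 = 1)
    (hξ : ξ = (9 * F ^ 2 - Fm ^ 2 - 1) / 2 - s ^ 2)
    (hρ : ρ = (9 * F ^ 2 - s ^ 2) * c ^ 2 + s ^ 2 * Fm ^ 2)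
    (hh₁ : h₁ = (1 - |Fm|) ^ 2)
    (hρpos : 0 < ρ) :
    -1 < ξ + Real.sqrt ρ ↔ (h₁ < 9 * F ^ 2 ∨ |Fm| < c ^ 2) := by
  rw [show s ^ 2 = 1 - c ^ 2 by linarith, ← sq_abs Fm] at hξ hρ
  subst hξ hρ hh₁
  rw [← neg_or_sq_lt_discr_iff (abs_nonneg Fm) (sq_nonneg c) hρpos,
    ← Real.lt_sqrt_iff_neg_or_sq_lt]
  constructor <;> intro h <;> linarith
end

section
/- Let F, F₋, c, s be real numbers with c² + s² = 1, and define ξ = (9F² − F₋² − 1)/2 − s², ρ = (9F² − s²)c² + s²·F₋², h₁ = (1 − |F₋|)², h₂ = (1 + |F₋|)². Assume ρ > 0. Then ξ − √ρ > −1 if and only if (9F² > h₂, or both 9F² < h₁ and |F₋| < c²). -/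
/-!
Write `x = 9F²`, `m = |F₋|`, `C = c²`, `S = s²`. Then `(ξ + 1)² - ρ = (x - h₂)(x - h₁) / 4`, so
`√ρ < ξ + 1` amounts to `x ∉ [h₁, h₂]` together with `0 < ξ + 1`. Above `h₂` the latter is
automatic; below `h₁` one has `ξ + 1 < C - m`, while `2C(ξ + 1) = ρ + C² - m²` shows that
`m < C` forces `ξ + 1 > 0`.
-/

theorem Real.sqrt_lt_iff_pos_and_lt_sq_s15 {x y : ℝ} : √x < y ↔ 0 < y ∧ x < y ^ 2 :=
  ⟨fun h => have hy := (Real.sqrt_nonneg x).trans_lt h; ⟨hy, (Real.sqrt_lt' hy).mp h⟩,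
    fun ⟨hy, h⟩ => (Real.sqrt_lt' hy).mpr h⟩

section Branch

variable {x m C S : ℝ}

theorem add_one_sq_sub_eq (hCS : C + S = 1) :
    ((x - m ^ 2 - 1) / 2 - S + 1) ^ 2 - ((x - S) * C + S * m ^ 2) =
      (x - (1 + m) ^ 2) * (x - (1 - m) ^ 2) / 4 := by
  obtain rfl : S = 1 - C := by linarith
  ring

theorem lt_add_one_sq_iff (hCS : C + S = 1) (hm : 0 ≤ m) :
    (x - S) * C + S * m ^ 2 < ((x - m ^ 2 - 1) / 2 - S + 1) ^ 2 ↔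
      (1 + m) ^ 2 < x ∨ x < (1 - m) ^ 2 := by
  have h₁₂ : (1 - m) ^ 2 ≤ (1 + m) ^ 2 := by nlinarith
  rw [← sub_pos, add_one_sq_sub_eq hCS, div_pos_iff_of_pos_right four_pos, mul_pos_iff,
    sub_pos, sub_pos, sub_neg, sub_neg]
  constructor
  · rintro (⟨h, -⟩ | ⟨-, h⟩) <;> simp [h]
  · rintro (h | h)
    · exact Or.inl ⟨h, h₁₂.trans_lt h⟩
    · exact Or.inr ⟨h.trans_le h₁₂, h⟩

theorem add_one_pos_of_lt (hCS : C + S = 1) (hm : 0 ≤ m) (hC : 0 ≤ C) (h : (1 + m) ^ 2 < x) :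
    0 < (x - m ^ 2 - 1) / 2 - S + 1 := by
  nlinarith

theorem add_one_pos_iff_of_lt (hCS : C + S = 1) (hm : 0 ≤ m)
    (hρ : 0 < (x - S) * C + S * m ^ 2) (h : x < (1 - m) ^ 2) :
    0 < (x - m ^ 2 - 1) / 2 - S + 1 ↔ m < C := by
  constructor
  · intro hξ
    nlinarith
  · intro hmC
    have hC : 0 < C := hm.trans_lt hmC
    have hid : 2 * C * ((x - m ^ 2 - 1) / 2 - S + 1) =
        (x - S) * C + S * m ^ 2 + (C ^ 2 - m ^ 2) := by
      obtain rfl : S = 1 - C := by linarith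
      ring
    have : 0 < 2 * C * ((x - m ^ 2 - 1) / 2 - S + 1) := by nlinarith
    exact pos_of_mul_pos_right this (by positivity)

theorem neg_one_lt_sub_sqrt_iff (hCS : C + S = 1) (hm : 0 ≤ m) (hC : 0 ≤ C)
    (hρ : 0 < (x - S) * C + S * m ^ 2) :
    -1 < (x - m ^ 2 - 1) / 2 - S - √((x - S) * C + S * m ^ 2) ↔
      (1 + m) ^ 2 < x ∨ (x < (1 - m) ^ 2 ∧ m < C) := by
  rw [neg_lt_sub_iff_lt_add, add_comm 1, Real.sqrt_lt_iff_pos_and_lt_sq_s15,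
    lt_add_one_sq_iff hCS hm]
  constructor
  · rintro ⟨hξ, h | h⟩
    · exact Or.inl h
    · exact Or.inr ⟨h, (add_one_pos_iff_of_lt hCS hm hρ h).mp hξ⟩
  · rintro (h | ⟨h, hmC⟩)
    · exact ⟨add_one_pos_of_lt hCS hm hC h, Or.inl h⟩
    · exact ⟨(add_one_pos_iff_of_lt hCS hm hρ h).mpr hmC, Or.inr h⟩

end Branch

/-- Lemma 3.1, relation (3.3): `F₂ = ξ − √ρ > −1` iff `9F² > h₂`, or both
`9F² < h₁` and `|F₋| < c²`. -/
theorem lyapunov_branch2_gt_negone (F Fm c s ξ ρ h₁ h₂ : ℝ)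
    (hcs : c ^ 2 + s ^ 2 = 1)
    (hξ : ξ = (9 * F ^ 2 - Fm ^ 2 - 1) / 2 - s ^ 2)
    (hρ : ρ = (9 * F ^ 2 - s ^ 2) * c ^ 2 + s ^ 2 * Fm ^ 2)
    (hh₁ : h₁ = (1 - |Fm|) ^ 2)
    (hh₂ : h₂ = (1 + |Fm|) ^ 2)
    (hρpos : 0 < ρ) :
    -1 < ξ - Real.sqrt ρ ↔
      (h₂ < 9 * F ^ 2 ∨ (9 * F ^ 2 < h₁ ∧ |Fm| < c ^ 2)) := by
  subst hξ hρ hh₁ hh₂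
  rw [← sq_abs Fm] at hρpos ⊢
  exact neg_one_lt_sub_sqrt_iff hcs (abs_nonneg Fm) (sq_nonneg c) hρpos
end
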